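/- If a Boolean algebra A is ω-free over a set X (i.e., X generates A and every ω-preserving function from X into any nontrivial Boolean algebra extends to a unique homomorphism), then the set of nonzero elements of X is ω-independent. -/

import Mathlib

open scoped Classical

variable {A : Type*}

/-- ω-independence: `⊥ ∉ X`, (⊥1), (⊥3). -/
def OmegaIndep [BooleanAlgebra A] (X : Set A) : Prop :=
  (⊥ : A) ∉ X ∧
  (∀ F : Finset A, F.Nonempty → ↑F ⊆ X → F.sup id ≠ ⊤) ∧
  (∀ F G : Finset A, F.Nonempty → G.Nonempty → ↑F ⊆ X → ↑G ⊆ X →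
      F.inf id ≠ ⊥ → F.inf id ≤ G.sup id → (F ∩ G).Nonempty)

/-- n-independence: `⊥ ∉ X`, (⊥1), (⊥2)_n, (⊥3); `n = ⊤` codes ω. -/
def NIndep [BooleanAlgebra A] (n : ℕ∞) (X : Set A) : Prop :=
  (⊥ : A) ∉ X ∧
  (∀ F : Finset A, F.Nonempty → ↑F ⊆ X → F.sup id ≠ ⊤) ∧
  (∀ F : Finset A, F.Nonempty → ↑F ⊆ X → F.inf id = ⊥ →
      ∃ F' ⊆ F, (F'.card : ℕ∞) ≤ n ∧ F'.inf id = ⊥) ∧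
  (∀ F G : Finset A, F.Nonempty → G.Nonempty → ↑F ⊆ X → ↑G ⊆ X →
      F.inf id ≠ ⊥ → F.inf id ≤ G.sup id → (F ∩ G).Nonempty)

/-- Elementary product `∏_{x ∈ R} x^{ε x}`. -/
def elemProd [BooleanAlgebra A] (R : Finset A) (ε : A → Bool) : A :=
  R.inf (fun x => if ε x then x else xᶜ)

/-- `f` is n-preserving on `X` (`n = ⊤` codes ω-preserving). -/
def NPreserving [BooleanAlgebra A] {B : Type*} [BooleanAlgebra B]
    (n : ℕ∞) (X : Set A) (f : A → B) : Prop :=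
  ∀ F : Finset A, ↑F ⊆ X → (F.card : ℕ∞) ≤ n → F.inf id = ⊥ → F.inf f = ⊥

/-- Membership in the subalgebra generated by `X`. -/
inductive Gen [BooleanAlgebra A] (X : Set A) : A → Prop
  | of {x : A} : x ∈ X → Gen X x
  | bot : Gen X ⊥
  | top : Gen X ⊤
  | inf {x y : A} : Gen X x → Gen X y → Gen X (x ⊓ y)
  | sup {x y : A} : Gen X x → Gen X y → Gen X (x ⊔ y)
  | compl {x : A} : Gen X x → Gen X xᶜ

/-- `X` generates the Boolean algebra `A`. -/
def Generates [BooleanAlgebra A] (X : Set A) : Prop := ∀ a : A, Gen X a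

/-! For `F, G ⊆ X` finite with `0 ≠ ∏F ≤ ∑G` but `F ∩ G = ∅`, the two-valued map sending
`x` to `1` exactly when `∏F ≤ x ∉ G` is ω-preserving, because any finite `H` on which it is
`1` has `∏H ≥ ∏F > 0`. Its extension to a homomorphism sends `∏F` to `1` and `∑G` to `0`,
which is absurd. Taking `F = ∅` gives `∑G ≠ 1`. -/

theorem nPreserving_ite_le {B : Type*} [BooleanAlgebra A] [BooleanAlgebra B] (n : ℕ∞)
    (X : Set A) {a : A} (ha : a ≠ ⊥) (p : A → Prop) :
    NPreserving n X (fun x => if a ≤ x ∧ p x then (⊤ : B) else ⊥) := by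
  intro H _ _ hH
  by_contra hH'
  have hall : ∀ x ∈ H, a ≤ x := fun x hx => by_contra fun hax =>
    hH' (eq_bot_iff.2 ((Finset.inf_le hx).trans (by simp [hax])))
  exact ha (eq_bot_iff.2 (hH ▸ Finset.le_inf hall))

theorem inter_nonempty_of_inf_le_sup {B : Type*} [BooleanAlgebra A] [BooleanAlgebra B]
    [Nontrivial B] {X : Set A}
    (hext : ∀ f : A → B, NPreserving ⊤ X f → ∃ g : BoundedLatticeHom A B, ∀ x ∈ X, g x = f x)
    (F G : Finset A) (hF : ↑F ⊆ X) (hG : ↑G ⊆ X) (hne : F.inf id ≠ ⊥)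
    (hle : F.inf id ≤ G.sup id) : (F ∩ G).Nonempty := by
  by_contra hFG
  obtain ⟨g, hg⟩ := hext _ (nPreserving_ite_le (B := B) ⊤ X hne (· ∉ G))
  have hgF : g (F.inf id) = ⊤ := by
    rw [map_finset_inf, Finset.inf_eq_top_iff]
    intro x hx
    have hxG : x ∉ G := fun hxG => hFG ⟨x, Finset.mem_inter.2 ⟨hx, hxG⟩⟩
    exact (hg x (hF hx)).trans (if_pos ⟨Finset.inf_le hx, hxG⟩)
  have hgG : g (G.sup id) = ⊥ := by
    rw [map_finset_sup, Finset.sup_eq_bot_iff]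
    intro x hx
    simp [hg x (hG hx), hx]
  have hmono := OrderHomClass.mono g hle
  rw [hgF, hgG] at hmono
  exact top_ne_bot (eq_bot_iff.2 hmono)

theorem stmt_5.{u, v} {A : Type u} [BooleanAlgebra A] (X : Set A)
    (hgen : Generates X)
    (hfree : ∀ (B : Type v) [BooleanAlgebra B] [Nontrivial B] (f : A → B),
        NPreserving ⊤ X f →
        ∃! g : BoundedLatticeHom A B, ∀ x ∈ X, g x = f x) :
    OmegaIndep (X \ {⊥}) := by
  have key := inter_nonempty_of_inf_le_sup (B := Set PUnit.{v + 1})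
    (fun f hf => (hfree _ f hf).exists)
  have hsub : X \ {⊥} ⊆ X := Set.sdiff_subset
  refine ⟨fun h => h.2 rfl, ?_, ?_⟩
  · intro G ⟨x, hx⟩ hG htop
    have hne : (∅ : Finset A).inf id ≠ ⊥ := by
      simpa using ne_bot_of_le_ne_bot (hG hx).2 le_top
    simpa using key ∅ G (by simp) (hG.trans hsub) hne (by simp [htop])
  · intro F G _ _ hF hG hne hle
    exact key F G (hF.trans hsub) (hG.trans hsub) hne hle
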